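/- For every nonnegative integer n, ∑_{k=0}^{n} k⁵·H_k² = (n²(n+1)²(2n²+2n−1)/12)·H_{n+1}² − (1/360)·n(n+1)(n+2)(2n+1)(10n²+19n−9)·H_{n+1} + (1/21600)·n(n+1)(200n⁴+736n³+1159n²+971n−366). -/

import Mathlib

open Finset

/-- The harmonic number `H n = ∑_{k=1}^n 1/k`. -/
def H (n : ℕ) : ℚ := ∑ k ∈ Finset.range n, (1 : ℚ) / ((k : ℚ) + 1)

/-- The generalized harmonic number `H n ^ (m) = ∑_{k=1}^n 1/k^m`. -/
def Hgen (m n : ℕ) : ℚ := ∑ k ∈ Finset.range n, (1 : ℚ) / ((k : ℚ) + 1) ^ m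

theorem H_succ (n : ℕ) : H (n + 1) = H n + 1 / ((n : ℚ) + 1) := by
  simp [H, Finset.sum_range_succ]

theorem stmt13 (n : ℕ) :
    ∑ k ∈ Finset.range (n + 1), (k : ℚ) ^ 5 * (H k) ^ 2 =
      ((n : ℚ) ^ 2 * ((n : ℚ) + 1) ^ 2 * (2 * (n : ℚ) ^ 2 + 2 * (n : ℚ) - 1) / 12) * (H (n + 1)) ^ 2
        - (1 / 360) * (n : ℚ) * ((n : ℚ) + 1) * ((n : ℚ) + 2) * (2 * (n : ℚ) + 1) * (10 * (n : ℚ) ^ 2 + 19 * (n : ℚ) - 9) *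
            H (n + 1)
        + (1 / 21600) * (n : ℚ) * ((n : ℚ) + 1) *
            (200 * (n : ℚ) ^ 4 + 736 * (n : ℚ) ^ 3 + 1159 * (n : ℚ) ^ 2 + 971 * (n : ℚ) - 366) := by
  induction n with
  | zero => simp [H]
  | succ m ih =>
      rw [Finset.sum_range_succ, ih, H_succ (m + 1)]
      -- Both sides are now quadratics in `H (m + 1)` whose coefficients are rational functions
      -- of `m` with denominators powers of `m + 2`; clearing them leaves a polynomial identity.
      have hm : (m : ℚ) + 2 ≠ 0 := by positivity
      push_cast
      field_simp
      ring
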